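/- Let X ⊆ ℝ^p be a nonempty compact convex set, x* ∈ X, and X* = {x*}. Let x̂¹_n,…,x̂^m_n ∈ X and let f̌¹_n,…,f̌^m_n : X → ℝ be lower semicontinuous convex functions. For ε > 0 and ρ > 0, let X̌_{N,ε} be the ε-optimal solution set of min_{x∈X} (1/m) Σ_{i=1}^m f̌^i_n(x) and let X̌_{N,ρ,ε} be the ε-optimal solution set of min_{x∈X} (1/m) Σ_{i=1}^m f̌^i_n(x) + (ρ/2)‖(1/m) Σ_{j=1}^m x̂^j_n − x‖². Then Δ( X̌_{N,ρ,ε}, X* ) ≤ ‖(1/m) Σ_{i=1}^m x̂^i_n − x*‖ + 2√(ε/ρ) + inf_{x ∈ X̌_{N,ε}} ‖(1/m) Σ_{i=1}^m x̂^i_n − x‖. -/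
import Mathlib


noncomputable section

open Set Filter

lemma lsc_sublevel_closed {α : Type*} [TopologicalSpace α] {s : Set α} (hsc : IsClosed s)
    {f : α → ℝ} (hf : LowerSemicontinuousOn f s) (t : ℝ) :
    IsClosed {x ∈ s | f x ≤ t} := by
  have hsub : {x ∈ s | f x ≤ t} ⊆ s := fun x hx => hx.1
  refine isClosed_of_closure_subset fun x hx => ?_
  have hxs : x ∈ s := hsc.closure_subset ((closure_mono hsub) hx)
  refine ⟨hxs, ?_⟩
  by_contra h
  push_neg at h
  have hev : ∀ᶠ z in nhdsWithin x s, t < f z := hf x hxs t h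
  have hev' : ∀ᶠ z in nhdsWithin x {x ∈ s | f x ≤ t}, t < f z :=
    hev.filter_mono (nhdsWithin_mono x hsub)
  have hne : (nhdsWithin x {x ∈ s | f x ≤ t}).NeBot :=
    mem_closure_iff_nhdsWithin_neBot.mp hx
  obtain ⟨z, hz1, hz2⟩ := (hev'.and eventually_mem_nhdsWithin).exists
  exact absurd hz2.2 (not_le.mpr hz1)

lemma lsc_exists_min {α : Type*} [TopologicalSpace α] [T2Space α] {s : Set α}
    (hs : IsCompact s) (hne : s.Nonempty) {f : α → ℝ} (hf : LowerSemicontinuousOn f s) :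
    ∃ x ∈ s, ∀ y ∈ s, f x ≤ f y := by
  haveI : Nonempty s := hne.to_subtype
  have hsc : IsClosed s := hs.isClosed
  set K : s → Set α := fun y => {x ∈ s | f x ≤ f y} with hK
  have hKcl : ∀ y, IsClosed (K y) := fun y => lsc_sublevel_closed hsc hf _
  have hKn : ∀ y : s, (K y).Nonempty := fun y => ⟨y, y.2, le_rfl⟩
  have hKc : ∀ y, IsCompact (K y) := fun y => hs.of_isClosed_subset (hKcl y) (fun x hx => hx.1)
  have hKd : Directed (· ⊇ ·) K := by
    intro y1 y2
    rcases le_total (f y1) (f y2) with h | h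
    · exact ⟨y1, subset_rfl, fun x hx => ⟨hx.1, hx.2.trans h⟩⟩
    · exact ⟨y2, fun x hx => ⟨hx.1, hx.2.trans h⟩, subset_rfl⟩
  obtain ⟨x, hx⟩ :=
    IsCompact.nonempty_iInter_of_directed_nonempty_isCompact_isClosed K hKd hKn hKc hKcl
  simp only [mem_iInter] at hx
  have hxs : x ∈ s := (hx ⟨hne.some, hne.some_mem⟩).1
  exact ⟨x, hxs, fun y hy => (hx ⟨y, hy⟩).2⟩

lemma lsc_const_mul {α : Type*} [TopologicalSpace α] {s : Set α} {f : α → ℝ}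
    (hf : LowerSemicontinuousOn f s) {c : ℝ} (hc : 0 ≤ c) :
    LowerSemicontinuousOn (fun x => c * f x) s := by
  rcases hc.eq_or_lt with h | h
  · simp only [← h, zero_mul]
    exact lowerSemicontinuousOn_const
  · intro x hx y hy
    have hy' : y < c * f x := hy
    have h1 : y / c < f x := by rw [div_lt_iff₀ h]; nlinarith
    filter_upwards [hf x hx _ h1] with z hz
    have h2 := (div_lt_iff₀ h).mp hz
    show y < c * f z
    nlinarith

/-- The pessimistic distance `Δ(A,B) = sup_{a ∈ A} inf_{b ∈ B} ‖a - b‖`. -/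
def pdist {E : Type*} [NormedAddCommGroup E] (A B : Set E) : ℝ :=
  sSup ((fun a => sInf ((fun b => ‖a - b‖) '' B)) '' A)


lemma sqrt_key {ε ρ n1 n2 : ℝ} (hε : 0 < ε) (hρ : 0 < ρ) (h1 : 0 ≤ n1) (h2 : 0 ≤ n2)
    (h : ρ / 2 * n1 ^ 2 ≤ ρ / 2 * n2 ^ 2 + 2 * ε) : n1 ≤ n2 + 2 * Real.sqrt (ε / ρ) := by
  set s := Real.sqrt (ε / ρ) with hsdef
  have hs : 0 ≤ s := Real.sqrt_nonneg _
  have hs2 : s ^ 2 = ε / ρ := Real.sq_sqrt (le_of_lt (div_pos hε hρ))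
  have hn : n1 ^ 2 ≤ n2 ^ 2 + 4 * (ε / ρ) := by
    have h' : n1 ^ 2 - n2 ^ 2 ≤ 4 * ε / ρ := by
      rw [le_div_iff₀ hρ]; nlinarith
    have h'' : 4 * (ε / ρ) = 4 * ε / ρ := by ring
    linarith [h'']
  nlinarith [mul_nonneg hs h2, sq_nonneg (n1 - n2 - 2 * s)]

/-- Lemma 5.1: for the SD-augmented compromise decision problem,
`Δ(X̌_{N,ρ,ε}, X*) ≤ ‖(1/m) Σᵢ x̂ⁱₙ − x*‖ + 2√(ε/ρ) + inf_{x ∈ X̌_{N,ε}} ‖(1/m) Σᵢ x̂ⁱₙ − x‖`. -/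
theorem sd_compromise_pessimistic_distance_relation
    {p m : ℕ} (hm : 1 ≤ m)
    (X : Set (EuclideanSpace ℝ (Fin p)))
    (hXne : X.Nonempty) (hXcomp : IsCompact X) (hXconv : Convex ℝ X)
    (xstar : EuclideanSpace ℝ (Fin p)) (hxstar : xstar ∈ X)
    (Xstar : Set (EuclideanSpace ℝ (Fin p))) (hXstar : Xstar = {xstar})
    (xhat : Fin m → EuclideanSpace ℝ (Fin p)) (hxhat : ∀ i, xhat i ∈ X)
    (fcheck : Fin m → EuclideanSpace ℝ (Fin p) → ℝ)
    (hfcheck_lsc : ∀ i, LowerSemicontinuousOn (fcheck i) X)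
    (hfcheck_conv : ∀ i, ConvexOn ℝ X (fcheck i))
    (ε ρ : ℝ) (hε : 0 < ε) (hρ : 0 < ρ)
    (xavg : EuclideanSpace ℝ (Fin p)) (hxavg : xavg = (m : ℝ)⁻¹ • ∑ i, xhat i)
    -- the ε-optimal set of the aggregated problem (without the regularizer)
    (XcheckN : Set (EuclideanSpace ℝ (Fin p)))
    (hXcheckN : XcheckN = {x ∈ X | (1 / m : ℝ) * ∑ i, fcheck i x ≤
      sInf ((fun y => (1 / m : ℝ) * ∑ i, fcheck i y) '' X) + ε})
    -- the ε-optimal set of the SD-augmented compromise decision problem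
    (XcheckNρ : Set (EuclideanSpace ℝ (Fin p)))
    (hXcheckNρ : XcheckNρ = {x ∈ X |
      (1 / m : ℝ) * ∑ i, fcheck i x + ρ / 2 * ‖xavg - x‖ ^ 2 ≤
        sInf ((fun y => (1 / m : ℝ) * ∑ i, fcheck i y +
          ρ / 2 * ‖xavg - y‖ ^ 2) '' X) + ε}) :
    pdist XcheckNρ Xstar ≤
      ‖xavg - xstar‖ + 2 * Real.sqrt (ε / ρ) +
        sInf ((fun x => ‖xavg - x‖) '' XcheckN) := by
  classical
  set G : EuclideanSpace ℝ (Fin p) → ℝ := fun x => (1 / m : ℝ) * ∑ i, fcheck i x with hGdef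
  set r : EuclideanSpace ℝ (Fin p) → ℝ := fun x => ρ / 2 * ‖xavg - x‖ ^ 2 with hrdef
  set F : EuclideanSpace ℝ (Fin p) → ℝ := fun x => G x + r x with hFdef
  -- semicontinuity
  have hGlsc : LowerSemicontinuousOn G X := by
    exact lsc_const_mul (lowerSemicontinuousOn_sum (fun i _ => hfcheck_lsc i))
      (by positivity)
  have hrcont : Continuous r := by
    apply Continuous.mul continuous_const
    exact (continuous_const.sub continuous_id).norm.pow 2
  have hFlsc : LowerSemicontinuousOn F X :=
    hGlsc.add (hrcont.continuousOn.lowerSemicontinuousOn)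
  -- minimizers
  obtain ⟨xG, hxGX, hxGmin⟩ := lsc_exists_min hXcomp hXne hGlsc
  obtain ⟨xF, hxFX, hxFmin⟩ := lsc_exists_min hXcomp hXne hFlsc
  have hGbdd : BddBelow (G '' X) := ⟨G xG, by rintro z ⟨y, hy, rfl⟩; exact hxGmin y hy⟩
  have hFbdd : BddBelow (F '' X) := ⟨F xF, by rintro z ⟨y, hy, rfl⟩; exact hxFmin y hy⟩
  have hGinf_le : ∀ y ∈ X, sInf (G '' X) ≤ G y := fun y hy => csInf_le hGbdd ⟨y, hy, rfl⟩
  have hFinf_le : ∀ y ∈ X, sInf (F '' X) ≤ F y := fun y hy => csInf_le hFbdd ⟨y, hy, rfl⟩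
  -- xG is in XcheckN
  have hxGN : xG ∈ XcheckN := by
    rw [hXcheckN]
    refine ⟨hxGX, ?_⟩
    have : G xG ≤ sInf (G '' X) :=
      le_csInf (hXne.image G) (by rintro z ⟨y, hy, rfl⟩; exact hxGmin y hy)
    have hh : sInf ((fun y => (1 / m : ℝ) * ∑ i, fcheck i y) '' X) = sInf (G '' X) := rfl
    rw [hh]
    show G xG ≤ sInf (G '' X) + ε
    linarith
  have hNne : XcheckN.Nonempty := ⟨xG, hxGN⟩
  -- key pointwise bound
  have hkey : ∀ x ∈ XcheckNρ, ‖xavg - x‖ ≤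
      sInf ((fun x => ‖xavg - x‖) '' XcheckN) + 2 * Real.sqrt (ε / ρ) := by
    intro x hx
    rw [hXcheckNρ] at hx
    obtain ⟨hxX, hxopt⟩ := hx
    have hxopt' : F x ≤ sInf (F '' X) + ε := hxopt
    have hbound : ∀ y ∈ XcheckN, ‖xavg - x‖ - 2 * Real.sqrt (ε / ρ) ≤ ‖xavg - y‖ := by
      intro y hy
      rw [hXcheckN] at hy
      obtain ⟨hyX, hyopt⟩ := hy
      have hyopt' : G y ≤ sInf (G '' X) + ε := hyopt
      -- F x ≤ F y + ε, G y ≤ G x + ε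
      have h1 : F x ≤ F y + ε := le_trans hxopt' (by linarith [hFinf_le y hyX])
      have h2 : G y ≤ G x + ε := le_trans hyopt' (by linarith [hGinf_le x hxX])
      have h3 : r x ≤ r y + 2 * ε := by
        have : G x + r x ≤ G y + r y + ε := h1
        linarith
      have h4 : ρ / 2 * ‖xavg - x‖ ^ 2 ≤ ρ / 2 * ‖xavg - y‖ ^ 2 + 2 * ε := h3
      have := sqrt_key hε hρ (norm_nonneg (xavg - x)) (norm_nonneg (xavg - y)) h4
      linarith
    have := le_csInf (hNne.image _) (by rintro z ⟨y, hy, rfl⟩; exact hbound y hy)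
    linarith
  -- conclude
  rw [hXstar]
  unfold pdist
  apply Real.sSup_le
  · rintro z ⟨x, hx, rfl⟩
    simp only [Set.image_singleton, csInf_singleton]
    have h1 : ‖x - xstar‖ ≤ ‖xavg - xstar‖ + ‖xavg - x‖ := by
      have : x - xstar = (xavg - xstar) - (xavg - x) := by abel
      rw [this]
      exact (norm_sub_le _ _)
    have h2 := hkey x hx
    linarith
  · have h1 : 0 ≤ sInf ((fun x => ‖xavg - x‖) '' XcheckN) :=
      Real.sInf_nonneg (by rintro z ⟨y, hy, rfl⟩; exact norm_nonneg _)
    have h2 : 0 ≤ Real.sqrt (ε / ρ) := Real.sqrt_nonneg _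
    have h3 : 0 ≤ ‖xavg - xstar‖ := norm_nonneg _
    linarith

end
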